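/- arXiv:1807.02571 — 2 statements merged into one kernel-verified Lean document; each statement's English description precedes it below -/
import Mathlib

section
/- Let x, y ∈ ℝ^n and ε > 0. Define x̄_i = x_i if |x_i| > (ε/2)·‖x‖_1 and x̄_i = 0 otherwise, and define ȳ analogously with ‖y‖_1. Then |⟨x,y⟩ − ⟨x̄,ȳ⟩| ≤ ε·‖x‖_1·‖y‖_1. -/
/-! Coordinatewise, `x i * y i - x̄ i * ȳ i` vanishes when both coordinates survive the truncation;
otherwise one factor is dropped and at most `(ε / 2)` times its own 1-norm, so the error is
at most `(ε / 2) ‖x‖₁ |y i| + (ε / 2) ‖y‖₁ |x i|`. Summing over `i` gives `ε ‖x‖₁ ‖y‖₁`. -/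

open Finset

lemma abs_mul_sub_truncate_mul_truncate_le {a b s t : ℝ} (hs : 0 ≤ s) (ht : 0 ≤ t) :
    |a * b - (if s < |a| then a else 0) * (if t < |b| then b else 0)| ≤ s * |b| + t * |a| := by
  have hsb := mul_nonneg hs (abs_nonneg b)
  have hta := mul_nonneg ht (abs_nonneg a)
  split_ifs with ha hb hb
  · simpa using add_nonneg hsb hta
  · rw [mul_zero, sub_zero, abs_mul, mul_comm t]
    nlinarith [abs_nonneg a]
  all_goals
    rw [zero_mul, sub_zero, abs_mul]
    nlinarith [abs_nonneg b]

lemma abs_inner_sub_inner_truncate_le {ι : Type*} [Fintype ι] (x y : ι → ℝ) {s t : ℝ}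
    (hs : 0 ≤ s) (ht : 0 ≤ t) :
    |(∑ i, x i * y i) -
        ∑ i, (if s < |x i| then x i else 0) * (if t < |y i| then y i else 0)|
      ≤ s * ∑ i, |y i| + t * ∑ i, |x i| := by
  rw [← sum_sub_distrib, mul_sum, mul_sum, ← sum_add_distrib]
  exact (abs_sum_le_sum_abs _ _).trans
    (sum_le_sum fun i _ => abs_mul_sub_truncate_mul_truncate_le hs ht)

theorem truncated_inner_product_rescaled {n : ℕ} (ε : ℝ) (hε : 0 < ε)
    (x y : Fin n → ℝ) :
    |(∑ i, x i * y i) -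
        ∑ i, (if |x i| > ε / 2 * ∑ i', |x i'| then x i else 0) *
             (if |y i| > ε / 2 * ∑ i', |y i'| then y i else 0)|
      ≤ ε * (∑ i, |x i|) * ∑ i, |y i| := by
  have hX : 0 ≤ ε / 2 * ∑ i, |x i| := by positivity
  have hY : 0 ≤ ε / 2 * ∑ i, |y i| := by positivity
  calc _ ≤ ε / 2 * (∑ i, |x i|) * ∑ i, |y i| + ε / 2 * (∑ i, |y i|) * ∑ i, |x i| :=
        abs_inner_sub_inner_truncate_le x y hX hY
    _ = ε * (∑ i, |x i|) * ∑ i, |y i| := by ring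
end

section
/- Let A, B ∈ ℝ^{n×d} and ε > 0. For a matrix X define X̄ by X̄_{ij} = X_{ij} if |X_{ij}| > (ε/2)·‖X_i‖_1 (where X_i is the i-th row) and X̄_{ij} = 0 otherwise. Then ‖A B^T − Ā B̄^T‖_1 ≤ ε·‖A‖_1·‖B‖_1, where ‖·‖_1 denotes the entrywise 1-norm of a matrix. -/
open Matrix

/-- Row-wise truncation of a matrix: zero out entries of magnitude at most
(ε/2) times the 1-norm of their row. -/
noncomputable def truncate {n d : ℕ} (ε : ℝ) (X : Matrix (Fin n) (Fin d) ℝ) :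
    Matrix (Fin n) (Fin d) ℝ :=
  fun i j => if |X i j| > ε / 2 * ∑ k, |X i k| then X i j else 0

/-! Truncation moves each entry of row `i` by at most `(ε/2)‖X_i‖₁` and never increases its
absolute value. Writing `ab - āb̄ = (a - ā)b + ā(b - b̄)` entrywise, the error in the inner
product of row `A_i` with row `B_j` is at most `ε‖A_i‖₁‖B_j‖₁`; summing over `i, j` factors
into `ε‖A‖₁‖B‖₁`. -/

theorem abs_dotProduct_sub_dotProduct_le {ι R : Type*} [Fintype ι] [CommRing R] [LinearOrder R]
    [IsStrictOrderedRing R] {a a' b b' : ι → R} {α β : R} (ha : ∀ k, |a k - a' k| ≤ α)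
    (ha' : ∀ k, |a' k| ≤ |a k|) (hb : ∀ k, |b k - b' k| ≤ β) :
    |a ⬝ᵥ b - a' ⬝ᵥ b'| ≤ α * ∑ k, |b k| + β * ∑ k, |a k| := by
  have hsplit : a ⬝ᵥ b - a' ⬝ᵥ b' = ∑ k, ((a k - a' k) * b k + a' k * (b k - b' k)) := by
    simp only [dotProduct, ← Finset.sum_sub_distrib]
    exact Finset.sum_congr rfl fun k _ => by ring
  calc |a ⬝ᵥ b - a' ⬝ᵥ b'|
      ≤ ∑ k, |(a k - a' k) * b k + a' k * (b k - b' k)| := hsplit ▸ Finset.abs_sum_le_sum_abs _ _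
    _ ≤ ∑ k, (α * |b k| + β * |a k|) := by
        refine Finset.sum_le_sum fun k _ => (abs_add_le _ _).trans ?_
        rw [abs_mul, abs_mul, mul_comm |a' k|]
        exact add_le_add (mul_le_mul_of_nonneg_right (ha k) (abs_nonneg _))
          (mul_le_mul (hb k) (ha' k) (abs_nonneg _) ((abs_nonneg _).trans (hb k)))
    _ = α * ∑ k, |b k| + β * ∑ k, |a k| := by
        rw [Finset.sum_add_distrib, Finset.mul_sum, Finset.mul_sum]

section truncate

variable {n d : ℕ} {ε : ℝ}

theorem abs_sub_truncate_le (hε : 0 ≤ ε) (X : Matrix (Fin n) (Fin d) ℝ) (i : Fin n) (k : Fin d) :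
    |X i k - truncate ε X i k| ≤ ε / 2 * ∑ t, |X i t| := by
  unfold truncate
  split_ifs with h
  · rw [sub_self, abs_zero]
    positivity
  · simpa using not_lt.mp h

theorem abs_truncate_le (X : Matrix (Fin n) (Fin d) ℝ) (i : Fin n) (k : Fin d) :
    |truncate ε X i k| ≤ |X i k| := by
  unfold truncate
  split_ifs
  · exact le_rfl
  · simp

theorem abs_mul_transpose_sub_truncate_le (hε : 0 ≤ ε) (A B : Matrix (Fin n) (Fin d) ℝ)
    (i j : Fin n) :
    |(A * Bᵀ) i j - (truncate ε A * (truncate ε B)ᵀ) i j|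
      ≤ ε * (∑ t, |A i t|) * ∑ t, |B j t| := by
  simp only [mul_apply', transpose_apply]
  calc _ ≤ ε / 2 * (∑ t, |A i t|) * ∑ t, |B j t| + ε / 2 * (∑ t, |B j t|) * ∑ t, |A i t| :=
        abs_dotProduct_sub_dotProduct_le (abs_sub_truncate_le hε A i) (abs_truncate_le A i)
          (abs_sub_truncate_le hε B j)
    _ = ε * (∑ t, |A i t|) * ∑ t, |B j t| := by ring

end truncate

theorem approximate_matrix_multiplication {n d : ℕ} (ε : ℝ) (hε : 0 < ε)
    (A B : Matrix (Fin n) (Fin d) ℝ) :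
    ∑ i, ∑ j, |(A * Bᵀ) i j - (truncate ε A * (truncate ε B)ᵀ) i j|
      ≤ ε * (∑ i, ∑ j, |A i j|) * ∑ i, ∑ j, |B i j| := by
  calc _ ≤ ∑ i, ∑ j, ε * (∑ t, |A i t|) * ∑ t, |B j t| :=
        Finset.sum_le_sum fun i _ => Finset.sum_le_sum fun j _ =>
          abs_mul_transpose_sub_truncate_le hε.le A B i j
    _ = ε * (∑ i, ∑ j, |A i j|) * ∑ i, ∑ j, |B i j| := by
        simp only [← Finset.sum_mul, ← Finset.mul_sum]
end
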